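/- Under the setup of the previous identity (σ the Cholesky factor of the true covariance with parameters ν, ς > 0, β ∈ ℝ; ĉ positive definite with induced ν̂, β̂, ς̂; M = σ⁻¹ ĉ σ⁻ᵀ), for any k ≥ 2 the test statistic satisfies √(k−1)·(β̂ − β)/√(ς̂/ν̂) = −√(k−1)·[M⁻¹]₁₂ / √([M⁻¹]₁₁[M⁻¹]₂₂ − [M⁻¹]₁₂²). -/

import Mathlib

open Matrix

theorem stmt_15 (ν ς β : ℝ) (hν : 0 < ν) (hς : 0 < ς)
    (chat : Matrix (Fin 2) (Fin 2) ℝ) (hchat : chat.PosDef)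
    (k : ℕ) (hk : 2 ≤ k) :
    let σ : Matrix (Fin 2) (Fin 2) ℝ :=
      !![Real.sqrt ν, 0; β * Real.sqrt ν, Real.sqrt ς]
    let νhat := chat 0 0
    let βhat := chat 0 1 / chat 0 0
    let ςhat := chat 1 1 - (chat 0 1) ^ 2 / chat 0 0
    let M := σ⁻¹ * chat * (σ⁻¹)ᵀ
    Real.sqrt ((k : ℝ) - 1) * (βhat - β) / Real.sqrt (ςhat / νhat)
      = -(Real.sqrt ((k : ℝ) - 1) * M⁻¹ 0 1)
          / Real.sqrt (M⁻¹ 0 0 * M⁻¹ 1 1 - (M⁻¹ 0 1) ^ 2) := by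
  intro σ νhat βhat ςhat M
  have hs : 0 < Real.sqrt ν := Real.sqrt_pos.2 hν
  have ht : 0 < Real.sqrt ς := Real.sqrt_pos.2 hς
  set s := Real.sqrt ν with hsdef
  set t := Real.sqrt ς with htdef
  have hs2 : s ^ 2 = ν := Real.sq_sqrt hν.le
  have ht2 : t ^ 2 = ς := Real.sq_sqrt hς.le
  have hdetσ : σ.det = s * t := by simp [σ, Matrix.det_fin_two_of, hsdef, htdef]
  have hσdet_ne : σ.det ≠ 0 := by rw [hdetσ]; positivity
  have ha : 0 < chat 0 0 := by
    exact hchat.diag_pos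
  have hsym : chat 1 0 = chat 0 1 := by
    have := congrFun (congrFun hchat.1 1) 0
    simpa using this.symm
  have hd : 0 < chat.det := hchat.det_pos
  have hdeq : chat.det = chat 0 0 * chat 1 1 - chat 0 1 ^ 2 := by
    rw [Matrix.det_fin_two, hsym]; ring
  set a := chat 0 0
  set b := chat 0 1
  set c := chat 1 1
  have hM : M⁻¹ = σᵀ * chat⁻¹ * σ := by
    show (σ⁻¹ * chat * (σ⁻¹)ᵀ)⁻¹ = _
    rw [Matrix.mul_inv_rev, Matrix.mul_inv_rev, ← Matrix.transpose_nonsing_inv,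
      Matrix.nonsing_inv_nonsing_inv _ (isUnit_iff_ne_zero.2 hσdet_ne), Matrix.mul_assoc]
  have hcinv : chat⁻¹ = (chat.det)⁻¹ • !![c, -b; -b, a] := by
    rw [Matrix.inv_def, Matrix.adjugate_fin_two, hsym, Ring.inverse_eq_inv']
  have hσT : σᵀ = !![s, β * s; 0, t] := by
    ext i j; fin_cases i <;> fin_cases j <;> simp [σ, mul_comm, hsdef, htdef]
  have h01 : M⁻¹ 0 1 = s * t * (β * a - b) / chat.det := by
    rw [hM, hσT, hcinv]
    simp [Matrix.mul_apply, Fin.sum_univ_two, σ, Matrix.smul_apply]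
    field_simp
    ring
  have h00 : M⁻¹ 0 0 = ν * (c - 2 * β * b + β ^ 2 * a) / chat.det := by
    rw [hM, hσT, hcinv, ← hs2]
    simp [Matrix.mul_apply, Fin.sum_univ_two, σ, Matrix.smul_apply]
    field_simp
    ring
  have h11 : M⁻¹ 1 1 = ς * a / chat.det := by
    rw [hM, hσT, hcinv, ← ht2]
    simp [Matrix.mul_apply, Fin.sum_univ_two, σ, Matrix.smul_apply]
    field_simp
    ring
  rw [h01, h00, h11]
  have hdet_ne : chat.det ≠ 0 := hd.ne'
  have ha_ne : a ≠ 0 := ha.ne'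
  have hkey : ν * (c - 2 * β * b + β ^ 2 * a) / chat.det * (ς * a / chat.det)
      - (s * t * (β * a - b) / chat.det) ^ 2 = ν * ς / chat.det := by
    rw [← hs2, ← ht2]
    field_simp
    linear_combination (-1 : ℝ) * hdeq
  rw [hkey]
  have hsd : 0 < Real.sqrt chat.det := Real.sqrt_pos.2 hd
  have e1 : ςhat / νhat = chat.det / a ^ 2 := by
    show (c - b ^ 2 / a) / a = _
    rw [hdeq]; field_simp
  have e2 : Real.sqrt (chat.det / a ^ 2) = Real.sqrt chat.det / a := by
    rw [Real.sqrt_div hd.le, Real.sqrt_sq ha.le]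
  have e3 : Real.sqrt (ν * ς / chat.det) = s * t / Real.sqrt chat.det := by
    rw [Real.sqrt_div (by positivity), Real.sqrt_mul hν.le]
  have e4 : Real.sqrt chat.det * Real.sqrt chat.det = chat.det :=
    Real.mul_self_sqrt hd.le
  rw [e1, e2, e3]
  show Real.sqrt ((k:ℝ) - 1) * (b / a - β) / _ = _
  field_simp
  linear_combination (Real.sqrt ((k : ℝ) - 1) * (β * a - b)) * e4
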